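/- Let φ be a sequence of pivots applicable to a simple graph G, let S = sup(φ) be its support, and let x, y be distinct vertices of G. Then {x,y} is an edge of Gφ if and only if the induced subgraph G[S ⊕ {x,y}] has an odd number of perfect matchings, i.e. pm(G[S ⊕ {x,y}]) = 1. -/

import Mathlib

set_option linter.unusedSectionVars false

variable {V : Type*} [Fintype V] [DecidableEq V]

/-- Local complementation at a vertex `w`: complement the edges within `N_G(w)`. -/
def SimpleGraph.localComp (G : SimpleGraph V) (w : V) : SimpleGraph V where
  Adj x y := x ≠ y ∧ Xor' (G.Adj x y) (G.Adj x w ∧ G.Adj y w)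
  symm := ⟨by
    intro x y ⟨hne, hx⟩
    refine ⟨hne.symm, ?_⟩
    have h1 := G.adj_comm x y
    unfold Xor' at hx ⊢
    unfold Xor at hx ⊢
    tauto⟩
  loopless := ⟨by intro x ⟨h, _⟩; exact h rfl⟩

/-- `x ∼_G y` : `x = y` or `{x,y}` is an edge of `G`. -/
def SimpleGraph.nbr (G : SimpleGraph V) (x y : V) : Prop := x = y ∨ G.Adj x y

theorem SimpleGraph.nbr_comm (G : SimpleGraph V) (x y : V) : G.nbr x y ↔ G.nbr y x :=
  or_congr eq_comm (G.adj_comm x y)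

private theorem xor_swap_right (a b c : Prop) : Xor' (Xor' a b) c ↔ Xor' (Xor' a c) b := by
  unfold Xor'; unfold Xor; tauto

/-- The pivot `G[uv]` of `G` on an edge `{u,v}`, characterized by
`x ∼_{G[uv]} y ⟺ (x ∼_G y) XOR ((x ∼_G u) ∧ (y ∼_G v)) XOR ((x ∼_G v) ∧ (y ∼_G u))`. -/
def SimpleGraph.pivot (G : SimpleGraph V) (u v : V) : SimpleGraph V where
  Adj x y := x ≠ y ∧
    Xor' (Xor' (G.nbr x y) (G.nbr x u ∧ G.nbr y v)) (G.nbr x v ∧ G.nbr y u)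
  symm := ⟨by
    intro x y ⟨hne, hx⟩
    refine ⟨hne.symm, ?_⟩
    show Xor' (Xor' (G.nbr y x) (G.nbr y u ∧ G.nbr x v)) (G.nbr y v ∧ G.nbr x u)
    rw [G.nbr_comm y x, and_comm (a := G.nbr y u) (b := G.nbr x v),
      and_comm (a := G.nbr y v) (b := G.nbr x u)]
    exact (xor_swap_right _ _ _).mp hx⟩
  loopless := ⟨by intro x ⟨h, _⟩; exact h rfl⟩

/-- Determinant over GF(2) of the adjacency matrix of the subgraph of `G` induced by `S`. -/
noncomputable def gdet (G : SimpleGraph V) (S : Finset V) : ZMod 2 := by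
  classical
  exact Matrix.det (Matrix.of fun i j : S => if G.Adj i j then (1 : ZMod 2) else 0)

/-- Apply a sequence of pivots (left to right). -/
def applyPivots (G : SimpleGraph V) : List (V × V) → SimpleGraph V
  | [] => G
  | p :: φ => applyPivots (G.pivot p.1 p.2) φ

/-- A sequence of pivots is applicable when each pair is an edge of the graph
obtained by applying all preceding pivots. -/
def PivotsApplicable (G : SimpleGraph V) : List (V × V) → Prop
  | [] => True
  | p :: φ => G.Adj p.1 p.2 ∧ PivotsApplicable (G.pivot p.1 p.2) φ

/-- The support of a sequence of pivots: vertices occurring an odd number of times. -/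
def pivotSupport (φ : List (V × V)) : Finset V :=
  Finset.univ.filter fun x => Odd ((φ.flatMap fun p => [p.1, p.2]).count x)

/-- A sequence of pivots is reduced if its pivot vertices are pairwise distinct. -/
def ReducedSeq (φ : List (V × V)) : Prop := (φ.flatMap fun p => [p.1, p.2]).Nodup

/-- The number of perfect matchings of the subgraph of `G` induced by `S`:
sets of edges of `G` inside `S` such that every vertex of `S` lies in exactly one of them. -/
noncomputable def pmCount (G : SimpleGraph V) (S : Finset V) : ℕ := by
  classical
  exact (Finset.univ.filter fun P : Finset (Sym2 V) =>
    (∀ e ∈ P, e ∈ G.edgeSet ∧ ∀ v ∈ e, v ∈ S) ∧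
    ∀ v ∈ S, ∃! e, e ∈ P ∧ v ∈ e).card

/-!
Over `ZMod 2` the determinant of a symmetric matrix is a sum over involutions only (a permutation
and its inverse contribute equal terms), so for the adjacency matrix of `G[S]` it counts the
perfect matchings of `G[S]` modulo 2: `gdet G S = pm(G[S])`.

The pivot `G[uv]` is the principal pivot transform of the adjacency matrix `A` on `{u, v}`:
writing `M_X` for `M` with its rows outside `X` replaced by those of the identity, the adjacency
matrix `P` of `G[uv]` satisfies `P * A_{uv} = 1_{uv}`, the identity with its rows outside `{u, v}`
replaced by those of `A`. Multiplying `P_Y` by `A_{uv}` therefore gives `A_{{u,v} ∆ Y}`, and since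
`det A_{uv} = 1`, every principal minor obeys `gdet (G.pivot u v) Y = gdet G ({u, v} ∆ Y)`. By
induction `gdet Gφ Y = gdet G (sup φ ∆ Y)`, and `gdet H {x, y}` is `1` exactly when `xy` is an
edge of `H`.
-/

open Finset Matrix Equiv

namespace Matrix

section PiecewiseRows

variable {m n p α : Type*} [DecidableEq m]

def piecewiseRows (S : Finset m) (B A : Matrix m n α) : Matrix m n α :=
  of fun i => if i ∈ S then B i else A i

lemma piecewiseRows_empty (B A : Matrix m n α) : piecewiseRows ∅ B A = A := by
  ext i j
  simp [piecewiseRows]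

lemma piecewiseRows_piecewiseRows (X Y : Finset m) (B A : Matrix m n α) :
    piecewiseRows Y (piecewiseRows X A B) (piecewiseRows X B A) =
      piecewiseRows (symmDiff X Y) B A := by
  ext i j
  by_cases hX : i ∈ X <;> by_cases hY : i ∈ Y <;>
    simp [piecewiseRows, Finset.mem_symmDiff, hX, hY]

lemma piecewiseRows_mul [Fintype n] [NonUnitalNonAssocSemiring α] (S : Finset m)
    (B A : Matrix m n α) (C : Matrix n p α) :
    piecewiseRows S B A * C = piecewiseRows S (B * C) (A * C) := by
  ext i j
  by_cases hi : i ∈ S <;> simp [piecewiseRows, mul_apply, hi]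

end PiecewiseRows

variable {n R : Type*} [Fintype n] [DecidableEq n] [CommRing R]

lemma mul_piecewiseRows_one_apply (S : Finset n) (C B : Matrix n n R) (i j : n) :
    (C * piecewiseRows S B 1) i j = C i j + ∑ k ∈ S, C i k * (B - 1) k j := by
  have (k : n) : C i k * piecewiseRows S B 1 k j =
      C i k * (1 : Matrix n n R) k j + if k ∈ S then C i k * (B - 1) k j else 0 := by
    by_cases hk : k ∈ S
    · simp only [piecewiseRows, of_apply, hk, if_true, sub_apply]
      ring
    · simp [piecewiseRows, hk]
  rw [mul_apply, sum_congr rfl fun k _ => this k, sum_add_distrib, ← mul_apply, mul_one,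
    sum_ite_mem, univ_inter]

lemma det_piecewiseRows_one (S : Finset n) (M : Matrix n n R) :
    (piecewiseRows S M 1).det = (M.submatrix ((↑) : S → n) (↑)).det := by
  rw [← det_submatrix_equiv_self (Equiv.sumCompl (· ∈ S))]
  have : (piecewiseRows S M 1).submatrix (Equiv.sumCompl (· ∈ S)) (Equiv.sumCompl (· ∈ S)) =
      fromBlocks (M.submatrix (↑) (↑)) (M.submatrix (↑) (↑)) 0 1 := by
    ext (⟨i, hi⟩ | ⟨i, hi⟩) (⟨j, hj⟩ | ⟨j, hj⟩) <;> simp [piecewiseRows, hi, one_apply]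
    rintro rfl
    contradiction
  rw [this, det_fromBlocks_zero₂₁, det_one, mul_one]

/-- The hypothesis characterizes `P` as the principal pivot transform of `M` on `X`; in this form
no invertibility of `M` on `X` is needed. -/
theorem det_piecewiseRows_mul_det_of_mul_eq {P M : Matrix n n R} {X : Finset n}
    (hP : P * piecewiseRows X M 1 = piecewiseRows X 1 M) (Y : Finset n) :
    (piecewiseRows Y P 1).det * (piecewiseRows X M 1).det =
      (piecewiseRows (symmDiff X Y) M 1).det := by
  rw [← det_mul, piecewiseRows_mul, hP, one_mul, piecewiseRows_piecewiseRows]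

theorem det_eq_sum_involutive [CharP R 2] (M : Matrix n n R) (hM : M.IsSymm) :
    M.det = ∑ σ : Perm n with σ⁻¹ = σ, ∏ i, M (σ i) i := by
  have hsign (σ : Perm n) : ((Perm.sign σ : ℤ) : R) = 1 := by
    rcases Int.units_eq_one_or (Perm.sign σ) with h | h <;> simp [h, CharTwo.neg_eq]
  have hinv (σ : Perm n) : ∏ i, M (σ⁻¹ i) i = ∏ i, M (σ i) i := by
    rw [← Equiv.prod_comp σ]
    exact prod_congr rfl fun i _ => by rw [Perm.inv_eq_iff_eq.mpr rfl, hM.apply]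
  rw [det_apply', ← sum_filter_add_sum_filter_not univ (fun σ : Perm n => σ⁻¹ = σ)]
  simp only [hsign, one_mul]
  rw [add_eq_left]
  refine sum_involution (fun σ _ => σ⁻¹) (fun σ _ => by rw [hinv, CharTwo.add_self_eq_zero])
    (fun σ hσ _ => by simpa using hσ) (fun σ hσ => by simpa [eq_comm] using hσ)
    (fun σ _ => inv_inv σ)

end Matrix

lemma ZMod.boole_xor' (p q : Prop) [Decidable p] [Decidable q] [Decidable (Xor' p q)] :
    (if Xor' p q then 1 else 0 : ZMod 2) = (if p then 1 else 0) + (if q then 1 else 0) := by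
  by_cases hp : p <;> by_cases hq : q <;> simp [Xor', hp, hq, CharTwo.add_self_eq_zero]

lemma pivotSupport_cons {p : V × V} (hp : p.1 ≠ p.2) (φ : List (V × V)) :
    pivotSupport (p :: φ) = symmDiff {p.1, p.2} (pivotSupport φ) := by
  ext a
  simp only [pivotSupport, mem_filter, mem_univ, true_and, Finset.mem_symmDiff, mem_insert,
    mem_singleton, List.flatMap_cons, List.count_append, List.count_cons, List.count_nil,
    beq_iff_eq, Nat.odd_add]
  by_cases h1 : a = p.1
  · subst h1
    simp [Ne.symm hp]
  by_cases h2 : a = p.2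
  · subst h2
    simp [hp]
  · simp [h1, h2, Ne.symm h1, Ne.symm h2]

namespace SimpleGraph

open scoped Classical

section Pivot

variable {G : SimpleGraph V}

lemma boole_nbr (x y : V) :
    (if G.nbr x y then 1 else 0 : ZMod 2) = (G.adjMatrix (ZMod 2) + 1) x y := by
  by_cases hxy : x = y
  · simp [nbr, hxy]
  · simp [nbr, hxy, one_apply_ne hxy]

lemma adjMatrix_pivot_apply (u v x y : V) :
    (G.pivot u v).adjMatrix (ZMod 2) x y = G.adjMatrix (ZMod 2) x y +
      (G.adjMatrix (ZMod 2) + 1) x u * (G.adjMatrix (ZMod 2) + 1) y v +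
      (G.adjMatrix (ZMod 2) + 1) x v * (G.adjMatrix (ZMod 2) + 1) y u := by
  by_cases hxy : x = y
  · subst hxy
    simp only [adjMatrix_apply, SimpleGraph.irrefl, if_false, zero_add]
    grind
  · have hadj : (G.pivot u v).Adj x y ↔
        Xor' (Xor' (G.nbr x y) (G.nbr x u ∧ G.nbr y v)) (G.nbr x v ∧ G.nbr y u) := by
      simp [pivot, hxy]
    have boole_and (p q : Prop) [Decidable p] [Decidable q] :
        (if p ∧ q then 1 else 0 : ZMod 2) = (if p then 1 else 0) * (if q then 1 else 0) := by
      rw [ite_zero_mul_ite_zero, mul_one]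
    rw [adjMatrix_apply, if_congr hadj rfl rfl, ZMod.boole_xor', ZMod.boole_xor', boole_and,
      boole_and]
    simp only [boole_nbr, Matrix.add_apply (G.adjMatrix _) 1 x y, one_apply_ne hxy, add_zero]

lemma adjMatrix_pivot_mul_piecewiseRows {u v : V} (h : G.Adj u v) :
    (G.pivot u v).adjMatrix (ZMod 2) * piecewiseRows {u, v} (G.adjMatrix (ZMod 2)) 1 =
      piecewiseRows {u, v} 1 (G.adjMatrix (ZMod 2)) := by
  have hA (i j : V) : G.adjMatrix (ZMod 2) i j = G.adjMatrix (ZMod 2) j i :=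
    G.isSymm_adjMatrix.apply j i
  have hI (i j : V) : (1 : Matrix V V (ZMod 2)) i j = (1 : Matrix V V (ZMod 2)) j i :=
    isSymm_one.apply j i
  ext x j
  rw [mul_piecewiseRows_one_apply, sum_pair h.ne]
  simp only [adjMatrix_pivot_apply, Matrix.add_apply, Matrix.sub_apply, hA j u, hA j v, hI j u,
    hI j v]
  simp only [adjMatrix_apply, h, h.symm, G.irrefl, if_true, if_false, one_apply_eq,
    one_apply_ne h.ne, one_apply_ne h.ne.symm]
  by_cases hxu : x = u
  · subst hxu
    simp only [piecewiseRows, of_apply, mem_insert_self, if_true, one_apply_eq, one_apply_ne h.ne]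
    ring_nf
    reduce_mod_char
  by_cases hxv : x = v
  · subst hxv
    simp only [piecewiseRows, of_apply, mem_insert, mem_singleton, or_true, if_true, one_apply_eq,
      one_apply_ne h.ne.symm]
    ring_nf
    reduce_mod_char
  · simp only [piecewiseRows, of_apply, mem_insert, mem_singleton, hxu, hxv, or_false, if_false,
      one_apply_ne hxu, one_apply_ne hxv, adjMatrix_apply]
    ring_nf
    reduce_mod_char

lemma gdet_eq_det_piecewiseRows (S : Finset V) :
    gdet G S = (piecewiseRows S (G.adjMatrix (ZMod 2)) 1).det := by
  rw [det_piecewiseRows_one]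
  rfl

/-- Rather than expanding a determinant indexed by a subtype, the pivot identity with `Y = {u, v}`
exhibits `gdet G {u, v}` as a unit of `ZMod 2`. -/
lemma gdet_pair_of_adj {u v : V} (h : G.Adj u v) : gdet G {u, v} = 1 := by
  have key := det_piecewiseRows_mul_det_of_mul_eq (adjMatrix_pivot_mul_piecewiseRows h) {u, v}
  rw [symmDiff_self, bot_eq_empty, piecewiseRows_empty, det_one, ← gdet_eq_det_piecewiseRows,
    ← gdet_eq_det_piecewiseRows] at key
  have eq_one_of_mul_eq_one : ∀ a b : ZMod 2, a * b = 1 → b = 1 := by decide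
  exact eq_one_of_mul_eq_one _ _ key

lemma gdet_pair_of_not_adj {x y : V} (h : ¬G.Adj x y) : gdet G {x, y} = 0 := by
  have hzero : (of fun i j : ({x, y} : Finset V) => if G.Adj i j then (1 : ZMod 2) else 0) = 0 := by
    have h' : ¬G.Adj y x := fun h' => h h'.symm
    ext ⟨i, hi⟩ ⟨j, hj⟩
    simp only [mem_insert, mem_singleton] at hi hj
    rcases hi with rfl | rfl <;> rcases hj with rfl | rfl <;> simp [h, h']
  have : Nonempty ({x, y} : Finset V) := ⟨⟨x, mem_insert_self x {y}⟩⟩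
  rw [gdet, hzero, det_zero]

lemma adj_iff_gdet_pair_eq_one {x y : V} : G.Adj x y ↔ gdet G {x, y} = 1 :=
  ⟨gdet_pair_of_adj, fun h => by_contra fun hxy => by simp [gdet_pair_of_not_adj hxy] at h⟩

lemma gdet_pivot {u v : V} (h : G.Adj u v) (Y : Finset V) :
    gdet (G.pivot u v) Y = gdet G (symmDiff {u, v} Y) := by
  have key := det_piecewiseRows_mul_det_of_mul_eq (adjMatrix_pivot_mul_piecewiseRows h) Y
  rwa [← gdet_eq_det_piecewiseRows, ← gdet_eq_det_piecewiseRows, ← gdet_eq_det_piecewiseRows,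
    gdet_pair_of_adj h, mul_one] at key

lemma gdet_applyPivots {φ : List (V × V)} (h : PivotsApplicable G φ) (Y : Finset V) :
    gdet (applyPivots G φ) Y = gdet G (symmDiff (pivotSupport φ) Y) := by
  induction φ generalizing G with
  | nil => simp [applyPivots, pivotSupport, ← bot_eq_empty]
  | cons p φ ih =>
    rw [applyPivots, ih h.2, gdet_pivot h.1, pivotSupport_cons h.1.ne, symmDiff_assoc]

end Pivot

section PerfectMatching

variable (G : SimpleGraph V)

def IsPerfectMatchingOn (S : Finset V) (P : Finset (Sym2 V)) : Prop :=
  (∀ e ∈ P, e ∈ G.edgeSet ∧ ∀ v ∈ e, v ∈ S) ∧ ∀ v ∈ S, ∃! e, e ∈ P ∧ v ∈ e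

lemma pmCount_eq_card (S : Finset V) : pmCount G S = #{P | G.IsPerfectMatchingOn S P} := by
  unfold pmCount IsPerfectMatchingOn
  convert rfl

variable {G} {S : Finset V}

def matchingOfPerm (σ : Perm S) : Finset (Sym2 V) := univ.image fun a : S => s((a : V), σ a)

lemma isPerfectMatchingOn_matchingOfPerm {σ : Perm S} (hσ : σ⁻¹ = σ)
    (hadj : ∀ a : S, G.Adj a (σ a)) : G.IsPerfectMatchingOn S (matchingOfPerm σ) := by
  have hσσ (a : S) : σ (σ a) = a := by simpa using (congrArg (· (σ a)) hσ).symm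
  refine ⟨?_, fun v hv => ⟨s(v, σ ⟨v, hv⟩),
    ⟨mem_image_of_mem (fun a : S => s((a : V), σ a)) (mem_univ (⟨v, hv⟩ : S)),
      Sym2.mem_mk_left _ _⟩, ?_⟩⟩
  · simp only [matchingOfPerm, mem_image, mem_univ, true_and]
    rintro _ ⟨a, rfl⟩
    refine ⟨hadj a, fun v hv => ?_⟩
    rcases Sym2.mem_iff.1 hv with rfl | rfl
    exacts [a.2, (σ a).2]
  · simp only [matchingOfPerm, mem_image, mem_univ, true_and]
    rintro _ ⟨⟨a, rfl⟩, hva⟩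
    rcases Sym2.mem_iff.1 hva with h | h
    · obtain rfl : a = ⟨v, hv⟩ := Subtype.ext h.symm
      rfl
    · have hav : σ a = ⟨v, hv⟩ := Subtype.ext h.symm
      rw [← hav, hσσ, h, Sym2.eq_swap]

namespace IsPerfectMatchingOn

variable {P : Finset (Sym2 V)} (hP : G.IsPerfectMatchingOn S P)
include hP

lemma existsUnique_partner (a : S) : ∃! b : S, s((a : V), b) ∈ P := by
  obtain ⟨e, ⟨heP, hae⟩, huniq⟩ := hP.2 a a.2
  have hb : Sym2.Mem.other hae ∈ S := (hP.1 e heP).2 _ (Sym2.other_mem hae)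
  refine ⟨⟨_, hb⟩, by simpa only [Sym2.other_spec hae], fun b hbP => Subtype.ext ?_⟩
  rw [← Sym2.congr_right (a := (a : V)), Sym2.other_spec hae]
  exact huniq _ ⟨hbP, Sym2.mem_mk_left _ _⟩

noncomputable def partner (a : S) : S := (hP.existsUnique_partner a).choose

lemma partner_mem (a : S) : s((a : V), hP.partner a) ∈ P :=
  (hP.existsUnique_partner a).choose_spec.1

lemma eq_partner {a b : S} (h : s((a : V), b) ∈ P) : b = hP.partner a :=
  (hP.existsUnique_partner a).unique h (hP.partner_mem a)

lemma adj_partner (a : S) : G.Adj a (hP.partner a) := (hP.1 _ (hP.partner_mem a)).1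

lemma partner_involutive : Function.Involutive hP.partner := fun a =>
  (hP.eq_partner (by rw [Sym2.eq_swap]; exact hP.partner_mem a)).symm

noncomputable def perm : Perm S := hP.partner_involutive.toPerm

lemma matchingOfPerm_perm : matchingOfPerm hP.perm = P := by
  ext e
  simp only [matchingOfPerm, perm, Function.Involutive.coe_toPerm, mem_image, mem_univ, true_and]
  refine ⟨fun ⟨a, ha⟩ => ha ▸ hP.partner_mem a, fun he => ?_⟩
  induction e using Sym2.ind with
  | _ x y =>
    have hx : x ∈ S := (hP.1 _ he).2 x (Sym2.mem_mk_left x y)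
    have hy : y ∈ S := (hP.1 _ he).2 y (Sym2.mem_mk_right x y)
    refine ⟨⟨x, hx⟩, ?_⟩
    rw [← hP.eq_partner (b := ⟨y, hy⟩) he]

end IsPerfectMatchingOn

variable (G S)

lemma card_involutive_perm_eq_pmCount :
    #{σ : Perm S | σ⁻¹ = σ ∧ ∀ a : S, G.Adj a (σ a)} = pmCount G S := by
  rw [pmCount_eq_card]
  refine card_bij' (fun σ _ => matchingOfPerm σ) (fun P hP => (mem_filter.1 hP).2.perm) ?_ ?_ ?_ ?_
  · intro σ hσ
    simp only [mem_filter, mem_univ, true_and] at hσ ⊢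
    exact isPerfectMatchingOn_matchingOfPerm hσ.1 hσ.2
  · intro P hP
    have hP' := (mem_filter.1 hP).2
    simp only [mem_filter, mem_univ, true_and]
    refine ⟨?_, hP'.adj_partner⟩
    rw [inv_eq_iff_mul_eq_one]
    ext a
    exact congrArg Subtype.val (hP'.partner_involutive a)
  · intro σ hσ
    simp only [mem_filter, mem_univ, true_and] at hσ
    ext a
    exact congrArg Subtype.val ((isPerfectMatchingOn_matchingOfPerm hσ.1 hσ.2).eq_partner
      (mem_image_of_mem _ (mem_univ a))).symm
  · intro P hP
    exact (mem_filter.1 hP).2.matchingOfPerm_perm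

lemma gdet_eq_pmCount : gdet G S = pmCount G S := by
  have hsymm : (of fun i j : S => if G.Adj i j then (1 : ZMod 2) else 0).IsSymm :=
    IsSymm.ext fun i j => by simp [G.adj_comm]
  rw [← card_involutive_perm_eq_pmCount, gdet, det_eq_sum_involutive _ hsymm]
  simp only [of_apply, Fintype.prod_boole, sum_boole, filter_filter]
  congr 2
  ext σ
  simp only [mem_filter, G.adj_comm (σ _)]

end PerfectMatching

end SimpleGraph

theorem adj_applyPivots_iff_odd_pm_general (G : SimpleGraph V) (φ : List (V × V))
    (h : PivotsApplicable G φ) (x y : V) :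
    ((applyPivots G φ).Adj x y ↔ Odd (pmCount G (symmDiff (pivotSupport φ) {x, y}))) := by
  rw [SimpleGraph.adj_iff_gdet_pair_eq_one, SimpleGraph.gdet_applyPivots h,
    SimpleGraph.gdet_eq_pmCount, ZMod.natCast_eq_one_iff_odd]

/-- If `φ` is applicable to `G` with support `S` and `x ≠ y`, then
`{x,y} ∈ E(Gφ)` iff `G[S ⊕ {x,y}]` has an odd number of perfect matchings. -/
theorem adj_applyPivots_iff_odd_pm (G : SimpleGraph V) (φ : List (V × V))
    (h : PivotsApplicable G φ) (x y : V) (hxy : x ≠ y) :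
    ((applyPivots G φ).Adj x y ↔ Odd (pmCount G (symmDiff (pivotSupport φ) {x, y}))) :=
  adj_applyPivots_iff_odd_pm_general G φ h x y
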